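/- arXiv:0807.1878 — 8 statements merged into one kernel-verified Lean document; each statement's English description precedes it below -/
import Mathlib

section
/- For C > 0 and a smooth positive function a, let ψ_ω(x) = C e^{-√ω |x|} with √ω = a(C²)/2. Then ∂_ω ∫_ℝ |ψ_ω(x)|² dx > 0 provided 0 < a'(C²) < a(C²)/C². -/
open Real MeasureTheory

lemma integral_exp_neg_mul_abs {k : ℝ} (hk : 0 < k) :
    ∫ x : ℝ, Real.exp (-(k * |x|)) = 2 / k := by
  rw [show (fun x : ℝ => Real.exp (-(k * |x|))) = fun x : ℝ => (fun y => Real.exp (-(k * y))) |x|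
      from rfl,
    integral_comp_abs (f := fun y : ℝ => Real.exp (-(k * y)))]
  have := MeasureTheory.integral_comp_mul_left_Ioi (fun y : ℝ => Real.exp (-y)) 0 hk
  simp only [mul_zero, smul_eq_mul] at this
  rw [this, integral_exp_neg_Ioi_zero]
  field_simp

/-- For `C > 0` and a smooth positive function `a`, with the solitary
wave `ψ_ω(x) = C e^{-√ω |x|}`, `√ω = a(C²)/2`, the derivative of the charge
`∫ |ψ_ω|² dx` with respect to `ω` along the solitary-wave branch (computed via the
chain rule as the ratio of `C`-derivatives) is positive provided
`0 < a'(C²) < a(C²)/C²`. -/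
theorem solitary_charge_monotone
    (a : ℝ → ℝ) (ha : ContDiff ℝ (⊤ : ℕ∞) a) (hapos : ∀ s, 0 < a s)
    (C : ℝ) (hC : 0 < C)
    (h1 : 0 < deriv a (C ^ 2)) (h2 : deriv a (C ^ 2) < a (C ^ 2) / C ^ 2) :
    0 < deriv (fun c : ℝ => ∫ x : ℝ, (c * Real.exp (-(a (c ^ 2) / 2) * |x|)) ^ 2) C
        / deriv (fun c : ℝ => (a (c ^ 2)) ^ 2 / 4) C := by
  set A := a (C ^ 2) with hA
  set A' := deriv a (C ^ 2) with hA'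
  have hApos : 0 < A := hapos _
  -- rewrite the integral
  have hfun : (fun c : ℝ => ∫ x : ℝ, (c * Real.exp (-(a (c ^ 2) / 2) * |x|)) ^ 2)
      = fun c : ℝ => 2 * c ^ 2 / a (c ^ 2) := by
    funext c
    have h1x : ∀ x : ℝ, (c * Real.exp (-(a (c ^ 2) / 2) * |x|)) ^ 2
        = c ^ 2 * Real.exp (-(a (c ^ 2) * |x|)) := by
      intro x
      rw [mul_pow, sq (Real.exp _), ← Real.exp_add]
      ring_nf
    simp only [h1x]
    rw [MeasureTheory.integral_const_mul, integral_exp_neg_mul_abs (hapos (c ^ 2))]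
    field_simp
  rw [hfun]
  -- derivative of a (c^2) at C
  have haD : HasDerivAt (fun c : ℝ => a (c ^ 2)) (A' * (2 * C)) C := by
    have hd1 : HasDerivAt a A' (C ^ 2) :=
      (ha.differentiable (by simp) (C ^ 2)).hasDerivAt
    have hd2 : HasDerivAt (fun c : ℝ => c ^ 2) (2 * C) C := by
      simpa using hasDerivAt_pow 2 C
    have hcomp : HasDerivAt (a ∘ fun c : ℝ => c ^ 2) (A' * (2 * C)) C :=
      HasDerivAt.comp (h₂ := a) (h := fun c : ℝ => c ^ 2) (x := C) hd1 hd2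
    exact hcomp
  -- derivative of numerator function
  have hnum : HasDerivAt (fun c : ℝ => 2 * c ^ 2 / a (c ^ 2))
      ((2 * (2 * C) * A - 2 * C ^ 2 * (A' * (2 * C))) / A ^ 2) C := by
    have hu : HasDerivAt (fun c : ℝ => 2 * c ^ 2) (2 * (2 * C)) C := by
      simpa using (hasDerivAt_pow 2 C).const_mul 2
    exact hu.div haD hApos.ne'
  -- derivative of denominator function
  have hden : HasDerivAt (fun c : ℝ => (a (c ^ 2)) ^ 2 / 4)
      (2 * A * (A' * (2 * C)) / 4) C := by
    have := (haD.pow 2)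
    simpa [mul_comm, mul_assoc, mul_left_comm] using this.div_const 4
  rw [hnum.deriv, hden.deriv]
  have hC2 : (0 : ℝ) < C ^ 2 := by positivity
  have hkey : C ^ 2 * A' < A := by
    have h2' := (lt_div_iff₀ hC2).mp h2
    nlinarith [h2']
  apply div_pos
  · apply div_pos
    · nlinarith
    · positivity
  · have : 0 < 2 * A * (A' * (2 * C)) := by positivity
    linarith
end

section
/- The nonzero finite-energy solitary wave solutions ψ(x,t) = e^{iωt} φ(x) of the equation i∂_t ψ = -ψ'' - δ(x)F(ψ(0,t)), with F(ψ) = a(|ψ|²)ψ, are exactly the functions φ(x) = C e^{iθ} e^{-√ω|x|} with C > 0, ω > 0, θ ∈ [0,2π), satisfying √ω = a(C²)/2 > 0; in particular for ω ≤ 0 only the zero solitary wave exists. -/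
/-!
Away from the origin `φ'' = ωφ`, so on each half-line `φ' + μφ` is a multiple of `e^{μx}` for
either root `μ` of `μ² = ω`. Square integrability on a half-line excludes `ω = 0` (then `φ` is
affine) and `ω = -κ² < 0`: there `φ(x + π/(2κ)) = φ'(x)/κ` and the energy `‖φ'‖² + κ²‖φ‖²` is
conserved, so `‖φ x‖² + ‖φ (x + π/(2κ))‖²` is constant. For `ω = k² > 0` it kills the growing
mode, leaving `φ' = -kφ` on `(0, ∞)`. By the symmetry `x ↦ -x` also `φ' = kφ` on `(-∞, 0)`, so
`φ = φ(0) e^{-k|x|}` and the one-sided derivatives at `0` are `∓kφ(0)`; the jump condition then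
reads `a(|φ(0)|²) = 2k`. Conversely this profile satisfies every condition.
-/

open Real MeasureTheory Filter Topology

/-- A (finite-energy) solitary-wave profile for the NLS equation
`i ψ_t = -ψ'' - δ(x) F(ψ(0,t))`, `F(ψ) = a(|ψ|²)ψ`: the amplitude `φ` is
continuous, square integrable, solves `φ'' = ω φ` away from the origin, and its
derivative has one-sided limits at `0` with jump `φ'(0+) - φ'(0-) = -F(φ(0))`. -/
def IsSolitaryWave (a : ℝ → ℝ) (ω : ℝ) (φ : ℝ → ℂ) : Prop :=
  Continuous φ ∧ MemLp φ 2 (volume : Measure ℝ) ∧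
  (∀ x : ℝ, x ≠ 0 → DifferentiableAt ℝ φ x ∧ DifferentiableAt ℝ (deriv φ) x ∧
      deriv (deriv φ) x = (ω : ℂ) * φ x) ∧
  ∃ dp dm : ℂ,
    Tendsto (deriv φ) (𝓝[>] (0:ℝ)) (𝓝 dp) ∧
    Tendsto (deriv φ) (𝓝[<] (0:ℝ)) (𝓝 dm) ∧
    dp - dm = -((a (‖φ 0‖ ^ 2) : ℂ) * φ 0)

open Set Complex

theorem eq_mul_cexp_of_hasDerivAt {s : Set ℝ} (hs : IsOpen s) (hs' : IsPreconnected s)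
    {f : ℝ → ℂ} {μ : ℂ} (hf : ∀ x ∈ s, HasDerivAt f (μ * f x) x) {x y : ℝ}
    (hx : x ∈ s) (hy : y ∈ s) : f y = f x * cexp (μ * (y - x)) := by
  have hg : ∀ t ∈ s, HasDerivAt (fun t : ℝ => f t * cexp (-(μ * t))) 0 t := fun t ht => by
    have he : HasDerivAt (fun t : ℝ => cexp (-(μ * t))) (-μ * cexp (-(μ * t))) t := by
      simpa [mul_comm] using (((hasDerivAt_id (t : ℂ)).const_mul μ).neg.cexp).comp_ofReal
    exact ((hf t ht).mul he).congr_deriv (by ring)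
  have hconst : f y * cexp (-(μ * y)) = f x * cexp (-(μ * x)) :=
    hs.is_const_of_deriv_eq_zero hs' (fun t ht => (hg t ht).differentiableAt.differentiableWithinAt)
      (fun t ht => (hg t ht).deriv) hy hx
  calc f y = f y * cexp (-(μ * y)) * cexp (μ * y) := by
        rw [mul_assoc, ← Complex.exp_add, neg_add_cancel, Complex.exp_zero, mul_one]
    _ = f x * cexp (μ * (y - x)) := by
        rw [hconst, mul_assoc, ← Complex.exp_add]; ring_nf

theorem eq_mul_cexp_of_hasDerivAt_of_mem_closure {s : Set ℝ} (hs : IsOpen s)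
    (hs' : IsPreconnected s) {f : ℝ → ℂ} {μ : ℂ} (hc : ContinuousOn f (closure s))
    (hf : ∀ x ∈ s, HasDerivAt f (μ * f x) x) {x y : ℝ} (hx : x ∈ closure s)
    (hy : y ∈ closure s) : f y = f x * cexp (μ * (y - x)) := by
  obtain ⟨x₀, hx₀⟩ := closure_nonempty_iff.1 ⟨x, hx⟩
  have hg : Continuous fun t : ℝ => f x₀ * cexp (μ * (t - x₀)) := by fun_prop
  have hfg : EqOn f (fun t => f x₀ * cexp (μ * (t - x₀))) (closure s) :=
    EqOn.of_subset_closure (fun t ht => eq_mul_cexp_of_hasDerivAt hs hs' hf hx₀ ht) hc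
      hg.continuousOn subset_closure le_rfl
  rw [hfg hx, hfg hy, mul_assoc, ← Complex.exp_add]
  ring_nf

theorem add_mul_eq_mul_cexp_of_second_order {s : Set ℝ} (hs : IsOpen s)
    (hs' : IsPreconnected s) {φ φ' : ℝ → ℂ} {μ c : ℂ} (hμ : μ ^ 2 = c)
    (hφ : ∀ x ∈ s, HasDerivAt φ (φ' x) x) (hφ' : ∀ x ∈ s, HasDerivAt φ' (c * φ x) x)
    {x y : ℝ} (hx : x ∈ s) (hy : y ∈ s) :
    φ' y + μ * φ y = (φ' x + μ * φ x) * cexp (μ * (y - x)) :=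
  eq_mul_cexp_of_hasDerivAt (f := fun t => φ' t + μ * φ t) hs hs'
    (fun t ht => ((hφ' t ht).add ((hφ t ht).const_mul μ)).congr_deriv (by rw [← hμ]; ring))
    hx hy

theorem not_integrable_of_eventually_ge {f : ℝ → ℝ} {ε : ℝ} (hε : 0 < ε)
    (hf : ∀ᶠ x in atTop, ε ≤ f x) : ¬ Integrable f := fun hint => by
  obtain ⟨N, hN⟩ := eventually_atTop.1 hf
  have hsub : Ici N ⊆ {x | ε ≤ f x} := fun x hx => hN x hx
  have := (measure_mono hsub).trans_lt (hint.measure_ge_lt_top hε)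
  simp at this

theorem not_integrable_sq_norm_of_tendsto {f : ℝ → ℂ}
    (hf : Tendsto (fun x => ‖f x‖) atTop atTop) : ¬ Integrable fun x => ‖f x‖ ^ 2 :=
  not_integrable_of_eventually_ge one_pos <| (hf.eventually_ge_atTop 1).mono fun _ hx =>
    one_le_pow₀ hx

theorem tendsto_norm_mul_cexp_sub_atTop {A B : ℂ} {k : ℝ} (hk : 0 < k) (hA : A ≠ 0) :
    Tendsto (fun x : ℝ => ‖A * cexp (k * x) - B * cexp (-k * x)‖) atTop atTop := by
  refine tendsto_atTop_mono' _ ?_ (tendsto_atTop_add_const_right _ (-‖B‖)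
    ((tendsto_exp_atTop.comp (tendsto_id.const_mul_atTop' hk)).const_mul_atTop (norm_pos_iff.2 hA)))
  filter_upwards [eventually_ge_atTop 0] with x hx
  have hdecay : ‖B * cexp (-k * x)‖ ≤ ‖B‖ := by
    rw [norm_mul, show -(k : ℂ) * x = ((-(k * x)) : ℝ) by push_cast; ring, norm_exp_ofReal]
    exact mul_le_of_le_one_right (norm_nonneg _) (exp_le_one_iff.2 (by nlinarith))
  have hgrow : ‖A * cexp (k * x)‖ = ‖A‖ * rexp (k * x) := by
    rw [norm_mul, show (k : ℂ) * x = ((k * x : ℝ) : ℂ) by push_cast; ring, norm_exp_ofReal]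
  have := norm_sub_norm_le (A * cexp (k * x)) (B * cexp (-k * x))
  simp only [Function.comp_apply, id]
  linarith

section HalfLine

variable {φ φ' : ℝ → ℂ} {ω : ℝ}

theorem eqOn_Ioi_deriv_of_pos (hω : 0 < ω) (hφ : ∀ x ∈ Ioi (0 : ℝ), HasDerivAt φ (φ' x) x)
    (hφ' : ∀ x ∈ Ioi (0 : ℝ), HasDerivAt φ' (ω * φ x) x)
    (hL2 : Integrable fun x => ‖φ x‖ ^ 2) :
    EqOn φ' (fun x => -√ω * φ x) (Ioi 0) := by
  set k := √ω
  have hk : 0 < k := sqrt_pos.2 hω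
  have hk2 : (k : ℂ) ^ 2 = ω := by rw [← ofReal_pow, sq_sqrt hω.le]
  have hk2' : (-(k : ℂ)) ^ 2 = ω := by rw [neg_sq, hk2]
  have h1 : (1 : ℝ) ∈ Ioi 0 := mem_Ioi.2 one_pos
  set A := φ' 1 + k * φ 1
  have hfactor : ∀ x ∈ Ioi (0 : ℝ), φ' x + k * φ x = A * cexp (k * (x - 1)) := fun _ hx =>
    add_mul_eq_mul_cexp_of_second_order isOpen_Ioi isPreconnected_Ioi hk2 hφ hφ' h1 hx
  -- the growing mode `A e^{kx}` must vanish for `φ` to be square integrable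
  suffices hA : A = 0 by
    intro x hx
    have := hfactor x hx
    rw [hA, zero_mul] at this
    linear_combination this
  by_contra hA
  have hgrow := ((tendsto_norm_mul_cexp_sub_atTop hk hA (B := φ' 1 + -k * φ 1)).comp
    (tendsto_atTop_add_const_right _ (-1) tendsto_id)).atTop_div_const (mul_pos two_pos hk)
  refine not_integrable_sq_norm_of_tendsto (hgrow.congr' ?_) hL2
  filter_upwards [eventually_gt_atTop 0] with x hx
  have hsplit : ((2 * k : ℝ) : ℂ) * φ x = (φ' x + k * φ x) - (φ' x + -k * φ x) := by
    push_cast; ring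
  rw [hfactor x hx, add_mul_eq_mul_cexp_of_second_order isOpen_Ioi isPreconnected_Ioi hk2' hφ hφ'
    h1 hx] at hsplit
  calc _ = ‖((2 * k : ℝ) : ℂ) * φ x‖ / (2 * k) := by
        rw [hsplit, Function.comp_apply, id]; push_cast; ring_nf
    _ = ‖φ x‖ := by
        rw [norm_mul, norm_real, norm_of_nonneg (by positivity)]; field_simp

theorem eqOn_Ioi_zero_of_hasDerivAt_zero (hφ : ∀ x ∈ Ioi (0 : ℝ), HasDerivAt φ (φ' x) x)
    (hφ' : ∀ x ∈ Ioi (0 : ℝ), HasDerivAt φ' 0 x) (hL2 : Integrable fun x => ‖φ x‖ ^ 2) :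
    EqOn φ 0 (Ioi 0) := by
  have h1 : (1 : ℝ) ∈ Ioi 0 := mem_Ioi.2 one_pos
  set d := φ' 1
  set b := φ 1 - d
  have hd : ∀ x ∈ Ioi (0 : ℝ), φ' x = d := fun x hx => by
    simpa using eq_mul_cexp_of_hasDerivAt (μ := 0) isOpen_Ioi isPreconnected_Ioi
      (fun t ht => by simpa using hφ' t ht) h1 hx
  have hlin : ∀ x ∈ Ioi (0 : ℝ), φ x = b + d * x := fun x hx => by
    have hconst : ∀ t ∈ Ioi (0 : ℝ), HasDerivAt (fun t : ℝ => φ t - d * t) (0 * (φ t - d * t)) t :=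
      fun t ht => ((hφ t ht).sub ((hasDerivAt_id t).ofReal_comp.const_mul d)).congr_deriv
        (by simp [hd t ht])
    have := eq_mul_cexp_of_hasDerivAt isOpen_Ioi isPreconnected_Ioi hconst h1 hx
    simp only [zero_mul, Complex.exp_zero, mul_one, ofReal_one] at this
    linear_combination this
  have hd0 : d = 0 := by
    by_contra hd0
    refine not_integrable_sq_norm_of_tendsto (tendsto_atTop_mono' _ ?_
      (tendsto_atTop_add_const_right _ (-‖b‖) (tendsto_id.const_mul_atTop (norm_pos_iff.2 hd0))))
      hL2
    filter_upwards [eventually_gt_atTop 0] with x hx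
    have := norm_sub_norm_le (d * x) (-b)
    rw [hlin x hx]
    simp only [norm_mul, norm_real, norm_of_nonneg hx.le, norm_neg, sub_neg_eq_add] at this
    rw [add_comm b]
    simp only [id]
    linarith
  have hb0 : b = 0 := by
    by_contra hb0
    refine not_integrable_of_eventually_ge (pow_pos (norm_pos_iff.2 hb0) 2) ?_ hL2
    filter_upwards [eventually_gt_atTop 0] with x hx
    rw [hlin x hx, hd0]
    simp
  intro x hx
  simp [hlin x hx, hb0, hd0]

theorem sq_norm_sub_mul_sq_norm_eq {s : Set ℝ} (hs : IsOpen s) (hs' : IsPreconnected s)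
    (hφ : ∀ x ∈ s, HasDerivAt φ (φ' x) x) (hφ' : ∀ x ∈ s, HasDerivAt φ' (ω * φ x) x)
    {x y : ℝ} (hx : x ∈ s) (hy : y ∈ s) :
    ‖φ' y‖ ^ 2 - ω * ‖φ y‖ ^ 2 = ‖φ' x‖ ^ 2 - ω * ‖φ x‖ ^ 2 := by
  have hE : ∀ t ∈ s, HasDerivAt (fun t => ‖φ' t‖ ^ 2 - ω * ‖φ t‖ ^ 2) 0 t := fun t ht => by
    refine ((hφ' t ht).norm_sq.sub ((hφ t ht).norm_sq.const_mul ω)).congr_deriv ?_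
    rw [← real_smul, real_inner_smul_right, real_inner_comm]
    ring
  exact hs.is_const_of_deriv_eq_zero hs'
    (fun t ht => (hE t ht).differentiableAt.differentiableWithinAt) (fun t ht => (hE t ht).deriv)
    hy hx

theorem apply_add_quarter_period_of_neg (hω : ω < 0)
    (hφ : ∀ x ∈ Ioi (0 : ℝ), HasDerivAt φ (φ' x) x)
    (hφ' : ∀ x ∈ Ioi (0 : ℝ), HasDerivAt φ' (ω * φ x) x) {x : ℝ} (hx : x ∈ Ioi 0) :
    φ (x + π / (2 * √(-ω))) = φ' x / √(-ω) := by
  set κ := √(-ω)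
  have hκ : 0 < κ := sqrt_pos.2 (neg_pos.2 hω)
  have hκ' : (κ : ℂ) ≠ 0 := ofReal_ne_zero.2 hκ.ne'
  have hμ : ((κ : ℂ) * I) ^ 2 = ω := by
    rw [mul_pow, I_sq, ← ofReal_pow, sq_sqrt (neg_nonneg.2 hω.le)]; push_cast; ring
  have hμ' : (-((κ : ℂ) * I)) ^ 2 = ω := by rw [neg_sq, hμ]
  have hxh : x + π / (2 * κ) ∈ Ioi (0 : ℝ) := by
    simp only [mem_Ioi] at hx ⊢; positivity
  have hquarter : (κ : ℂ) * I * ((x + π / (2 * κ) : ℝ) - x) = π / 2 * I := by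
    push_cast; field_simp; ring
  -- `φ' ± iκφ` is multiplied by `e^{±iπ/2} = ±i` over a quarter period
  have hu := add_mul_eq_mul_cexp_of_second_order isOpen_Ioi isPreconnected_Ioi hμ hφ hφ' hx hxh
  have hv := add_mul_eq_mul_cexp_of_second_order isOpen_Ioi isPreconnected_Ioi hμ' hφ hφ' hx hxh
  rw [hquarter, exp_pi_div_two_mul_I] at hu
  rw [show -((κ : ℂ) * I) * ((x + π / (2 * κ) : ℝ) - x) = -π / 2 * I by
    rw [neg_mul, hquarter]; ring, exp_neg_pi_div_two_mul_I] at hv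
  rw [eq_div_iff hκ']
  linear_combination (-I / 2) * (hu - hv) + (φ (x + π / (2 * κ)) * κ - φ' x) * I_sq

theorem eqOn_Ioi_zero_of_neg (hω : ω < 0) (hφ : ∀ x ∈ Ioi (0 : ℝ), HasDerivAt φ (φ' x) x)
    (hφ' : ∀ x ∈ Ioi (0 : ℝ), HasDerivAt φ' (ω * φ x) x)
    (hL2 : Integrable fun x => ‖φ x‖ ^ 2) : EqOn φ 0 (Ioi 0) := by
  set κ := √(-ω)
  have hκ : 0 < κ := sqrt_pos.2 (neg_pos.2 hω)
  have hκ2 : κ ^ 2 = -ω := sq_sqrt (neg_nonneg.2 hω.le)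
  set E := ‖φ' 1‖ ^ 2 - ω * ‖φ 1‖ ^ 2
  have hsum : ∀ x ∈ Ioi (0 : ℝ), ‖φ x‖ ^ 2 + ‖φ (x + π / (2 * κ))‖ ^ 2 = E / κ ^ 2 :=
    fun x hx => by
      have henergy := sq_norm_sub_mul_sq_norm_eq isOpen_Ioi isPreconnected_Ioi hφ hφ'
        (mem_Ioi.2 one_pos) hx
      rw [apply_add_quarter_period_of_neg hω hφ hφ' hx, norm_div, norm_real, norm_of_nonneg hκ.le,
        eq_div_iff (by positivity), add_mul, div_pow, div_mul_cancel₀ _ (by positivity), hκ2]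
      linarith
  have hE : E / κ ^ 2 ≤ 0 := not_lt.1 fun hpos =>
    not_integrable_of_eventually_ge hpos ((eventually_gt_atTop 0).mono fun x hx => (hsum x hx).ge)
      (hL2.add (hL2.comp_add_right _))
  intro x hx
  have := hsum x hx
  have : ‖φ x‖ ^ 2 = 0 := by nlinarith [sq_nonneg ‖φ x‖, sq_nonneg ‖φ (x + π / (2 * κ))‖]
  simpa using this

theorem eqOn_Ioi_zero_of_nonpos (hω : ω ≤ 0) (hφ : ∀ x ∈ Ioi (0 : ℝ), HasDerivAt φ (φ' x) x)
    (hφ' : ∀ x ∈ Ioi (0 : ℝ), HasDerivAt φ' (ω * φ x) x)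
    (hL2 : Integrable fun x => ‖φ x‖ ^ 2) : EqOn φ 0 (Ioi 0) := by
  rcases hω.lt_or_eq with hω | rfl
  · exact eqOn_Ioi_zero_of_neg hω hφ hφ' hL2
  · exact eqOn_Ioi_zero_of_hasDerivAt_zero hφ (fun x hx => by simpa using hφ' x hx) hL2

end HalfLine

theorem integrable_exp_neg_mul_abs {b : ℝ} (hb : 0 < b) :
    Integrable fun x : ℝ => rexp (-(b * |x|)) := by
  set f := fun x : ℝ => rexp (-(b * |x|))
  have hIoi : IntegrableOn f (Ioi 0) :=
    (exp_neg_integrableOn_Ioi 0 hb).congr_fun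
      (fun x hx => by simp [f, abs_of_pos (mem_Ioi.1 hx)]) measurableSet_Ioi
  have hind : Integrable ((Ici 0).indicator f) :=
    (integrable_indicator_iff measurableSet_Ici).2
      ((integrableOn_Ici_iff_integrableOn_Ioi (f := f)).2 hIoi)
  refine (hind.add hind.comp_neg).mono' (by fun_prop) (Eventually.of_forall fun x => ?_)
  have hnonneg : ∀ y, 0 ≤ (Ici 0).indicator f y :=
    indicator_nonneg fun _ _ => (exp_pos _).le
  rw [norm_of_nonneg (exp_pos _).le]
  change f x ≤ (Ici 0).indicator f x + (Ici 0).indicator f (-x)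
  rcases le_total 0 x with hx | hx
  · rw [indicator_of_mem (mem_Ici.2 hx)]
    linarith [hnonneg (-x)]
  · rw [indicator_of_mem (show -x ∈ Ici 0 from mem_Ici.2 (neg_nonneg.2 hx))]
    simp only [f, abs_neg] at *
    linarith [hnonneg x]

theorem hasDerivAt_mul_cexp (A c : ℂ) (x : ℝ) :
    HasDerivAt (fun t : ℝ => A * cexp (c * t)) (c * A * cexp (c * x)) x := by
  have := (((hasDerivAt_id (x : ℂ)).const_mul c).cexp.const_mul A).comp_ofReal
  simpa [mul_comm, mul_left_comm, mul_assoc] using this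

theorem deriv_mul_cexp (A c : ℂ) :
    deriv (fun t : ℝ => A * cexp (c * t)) = fun t : ℝ => c * A * cexp (c * t) :=
  funext fun x => (hasDerivAt_mul_cexp A c x).deriv

theorem second_order_of_eventuallyEq_mul_cexp {f : ℝ → ℂ} {A c : ℂ} {x : ℝ}
    (hf : f =ᶠ[𝓝 x] fun t => A * cexp (c * t)) :
    deriv f x = c * f x ∧ DifferentiableAt ℝ f x ∧ DifferentiableAt ℝ (deriv f) x ∧
      deriv (deriv f) x = c ^ 2 * f x := by
  have hd : deriv f =ᶠ[𝓝 x] fun t => c * A * cexp (c * t) := deriv_mul_cexp A c ▸ hf.deriv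
  have hdd : deriv (deriv f) =ᶠ[𝓝 x] fun t => c * (c * A) * cexp (c * t) :=
    deriv_mul_cexp (c * A) c ▸ hd.deriv
  refine ⟨by rw [hd.eq_of_nhds, hf.eq_of_nhds]; ring,
    hf.differentiableAt_iff.2 (hasDerivAt_mul_cexp A c x).differentiableAt,
    hd.differentiableAt_iff.2 (hasDerivAt_mul_cexp (c * A) c x).differentiableAt,
    by rw [hdd.eq_of_nhds, hf.eq_of_nhds]; ring⟩

theorem isSolitaryWave_mul_cexp_neg_abs {a : ℝ → ℝ} (A : ℂ) {k : ℝ} (hk : 0 < k)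
    (ha : a (‖A‖ ^ 2) = 2 * k) :
    IsSolitaryWave a (k ^ 2) fun x => A * cexp (-(k * |x| : ℝ)) := by
  set φ := fun x : ℝ => A * cexp (-(k * |x| : ℝ))
  have hc : Continuous φ := by fun_prop
  have hright : ∀ x ∈ Ioi (0 : ℝ), φ =ᶠ[𝓝 x] fun t => A * cexp (-k * t) := fun x hx =>
    eventually_of_mem (Ioi_mem_nhds hx) fun t ht => by
      simp [φ, abs_of_pos (mem_Ioi.1 ht)]
  have hleft : ∀ x ∈ Iio (0 : ℝ), φ =ᶠ[𝓝 x] fun t => A * cexp (k * t) := fun x hx =>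
    eventually_of_mem (Iio_mem_nhds hx) fun t ht => by
      simp [φ, abs_of_neg (mem_Iio.1 ht)]
  have hlimit : ∀ (s : Set ℝ) (c : ℂ), (∀ x ∈ s, deriv φ x = c * φ x) →
      Tendsto (deriv φ) (𝓝[s] 0) (𝓝 (c * A)) := fun s c hs =>
    tendsto_nhdsWithin_congr (fun x hx => (hs x hx).symm)
      (by simpa [φ] using ((hc.tendsto 0).const_mul c).mono_left nhdsWithin_le_nhds)
  refine ⟨hc, ?_, fun x hx => ?_, -k * A, k * A,
    hlimit _ _ fun x hx => (second_order_of_eventuallyEq_mul_cexp (hright x hx)).1,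
    hlimit _ _ fun x hx => (second_order_of_eventuallyEq_mul_cexp (hleft x hx)).1, ?_⟩
  · rw [memLp_two_iff_integrable_sq_norm hc.aestronglyMeasurable]
    refine ((integrable_exp_neg_mul_abs (mul_pos two_pos hk)).const_mul (‖A‖ ^ 2)).congr
      (Eventually.of_forall fun x => ?_)
    simp only [φ, norm_mul, mul_pow, ← ofReal_neg, norm_exp_ofReal, sq (rexp _), ← Real.exp_add]
    ring_nf
  · rcases hx.lt_or_gt with hx | hx
    · obtain ⟨-, h⟩ := second_order_of_eventuallyEq_mul_cexp (hleft x hx)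
      simpa using h
    · obtain ⟨-, h⟩ := second_order_of_eventuallyEq_mul_cexp (hright x hx)
      simpa using h
  · simp [φ, ha]
    ring

theorem exists_eq_norm_mul_cexp_I_mul (z : ℂ) :
    ∃ θ ∈ Ico 0 (2 * π), z = ‖z‖ * cexp (I * θ) := by
  refine ⟨toIcoMod two_pi_pos 0 (arg z), by simpa using toIcoMod_mem_Ico two_pi_pos 0 (arg z), ?_⟩
  rw [← self_sub_toIcoDiv_zsmul, zsmul_eq_mul, ofReal_sub, ofReal_mul, mul_sub, Complex.exp_sub,
    show I * ((toIcoDiv two_pi_pos 0 (arg z) : ℝ) * (2 * π : ℝ)) =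
      (toIcoDiv two_pi_pos 0 (arg z)) * (2 * π * I) by push_cast; ring,
    exp_int_mul_two_pi_mul_I, div_one, mul_comm I]
  exact (norm_mul_exp_arg_mul_I z).symm

namespace IsSolitaryWave

variable {a : ℝ → ℝ} {ω : ℝ} {φ : ℝ → ℂ}

theorem hasDerivAt (h : IsSolitaryWave a ω φ) {x : ℝ} (hx : x ≠ 0) :
    HasDerivAt φ (deriv φ x) x ∧ HasDerivAt (deriv φ) (ω * φ x) x := by
  obtain ⟨hd, hd', heq⟩ := h.2.2.1 x hx
  exact ⟨hd.hasDerivAt, heq ▸ hd'.hasDerivAt⟩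

theorem hasDerivAt_comp_neg (h : IsSolitaryWave a ω φ) {x : ℝ} (hx : x ≠ 0) :
    HasDerivAt (fun t => φ (-t)) (-deriv φ (-x)) x ∧
      HasDerivAt (fun t => -deriv φ (-t)) (ω * φ (-x)) x := by
  obtain ⟨hd, hd'⟩ := h.hasDerivAt (neg_ne_zero.2 hx)
  exact ⟨by simpa [Function.comp_def] using hd.scomp x (hasDerivAt_neg x),
    by simpa [Function.comp_def] using (hd'.scomp x (hasDerivAt_neg x)).fun_neg⟩

theorem integrable_sq_norm (h : IsSolitaryWave a ω φ) : Integrable fun x => ‖φ x‖ ^ 2 :=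
  (memLp_two_iff_integrable_sq_norm h.1.aestronglyMeasurable).1 h.2.1

theorem eq_zero_of_nonpos (h : IsSolitaryWave a ω φ) (hω : ω ≤ 0) : φ = 0 := by
  have hright : EqOn φ 0 (Ioi 0) := eqOn_Ioi_zero_of_nonpos hω
    (fun x hx => (h.hasDerivAt hx.ne').1) (fun x hx => (h.hasDerivAt hx.ne').2) h.integrable_sq_norm
  have hleft : EqOn (fun t => φ (-t)) 0 (Ioi 0) := eqOn_Ioi_zero_of_nonpos hω
    (fun x hx => (h.hasDerivAt_comp_neg hx.ne').1) (fun x hx => (h.hasDerivAt_comp_neg hx.ne').2)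
    h.integrable_sq_norm.comp_neg
  have hzero : φ 0 = 0 := hright.of_subset_closure h.1.continuousOn continuousOn_const
    Ioi_subset_Ici_self (closure_Ioi 0).ge self_mem_Ici
  funext x
  rcases lt_trichotomy x 0 with hx | rfl | hx
  · simpa using hleft (neg_pos.2 hx)
  · exact hzero
  · exact hright hx

theorem deriv_eq_of_pos (h : IsSolitaryWave a ω φ) (hω : 0 < ω) :
    EqOn (deriv φ) (fun x => -√ω * φ x) (Ioi 0) ∧ EqOn (deriv φ) (fun x => √ω * φ x) (Iio 0) := by
  refine ⟨eqOn_Ioi_deriv_of_pos hω (fun x hx => (h.hasDerivAt hx.ne').1)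
    (fun x hx => (h.hasDerivAt hx.ne').2) h.integrable_sq_norm, fun x hx => ?_⟩
  have := eqOn_Ioi_deriv_of_pos hω (fun x hx => (h.hasDerivAt_comp_neg hx.ne').1)
    (fun x hx => (h.hasDerivAt_comp_neg hx.ne').2) h.integrable_sq_norm.comp_neg
    (neg_pos.2 (mem_Iio.1 hx))
  simp only [neg_neg] at this
  linear_combination -this

theorem eq_mul_cexp_neg_abs (h : IsSolitaryWave a ω φ) (hω : 0 < ω) (x : ℝ) :
    φ x = φ 0 * cexp (-(√ω * |x| : ℝ)) := by
  obtain ⟨hright, hleft⟩ := h.deriv_eq_of_pos hω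
  rcases le_total 0 x with hx | hx
  · have := eq_mul_cexp_of_hasDerivAt_of_mem_closure isOpen_Ioi isPreconnected_Ioi
      h.1.continuousOn (fun t ht => hright ht ▸ (h.hasDerivAt (ne_of_gt ht)).1)
      ((closure_Ioi 0).ge self_mem_Ici) ((closure_Ioi 0).ge hx)
    rw [this, abs_of_nonneg hx]
    push_cast; ring_nf
  · have := eq_mul_cexp_of_hasDerivAt_of_mem_closure isOpen_Iio isPreconnected_Iio
      h.1.continuousOn (fun t ht => hleft ht ▸ (h.hasDerivAt (ne_of_lt ht)).1)
      ((closure_Iio 0).ge self_mem_Iic) ((closure_Iio 0).ge hx)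
    rw [this, abs_of_nonpos hx]
    push_cast; ring_nf

theorem apply_sq_norm_mul_eq (h : IsSolitaryWave a ω φ) (hω : 0 < ω) :
    (a (‖φ 0‖ ^ 2) : ℂ) * φ 0 = 2 * √ω * φ 0 := by
  obtain ⟨hright, hleft⟩ := h.deriv_eq_of_pos hω
  obtain ⟨dp, dm, hdp, hdm, hjump⟩ := h.2.2.2
  have hlimit : ∀ (s : Set ℝ) (c : ℂ), EqOn (deriv φ) (fun x => c * φ x) s →
      Tendsto (deriv φ) (𝓝[s] 0) (𝓝 (c * φ 0)) := fun s c hs =>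
    tendsto_nhdsWithin_congr (fun x hx => (hs hx).symm)
      (((h.1.tendsto 0).const_mul c).mono_left nhdsWithin_le_nhds)
  have hdp' := tendsto_nhds_unique hdp (hlimit _ _ hright)
  have hdm' := tendsto_nhds_unique hdm (hlimit _ _ hleft)
  linear_combination hjump - hdp' + hdm'

end IsSolitaryWave

theorem solitary_wave_classification_general
    (a : ℝ → ℝ) (ω : ℝ) (φ : ℝ → ℂ) :
    (IsSolitaryWave a ω φ ∧ φ ≠ 0) ↔
      (0 < ω ∧ ∃ C θ : ℝ, 0 < C ∧ 0 ≤ θ ∧ θ < 2 * Real.pi ∧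
        Real.sqrt ω = a (C ^ 2) / 2 ∧ 0 < a (C ^ 2) ∧
        ∀ x : ℝ, φ x = (C : ℂ) * Complex.exp (Complex.I * θ) *
          Complex.exp (-(Real.sqrt ω * |x| : ℝ))) := by
  constructor
  · rintro ⟨h, hφ⟩
    have hω : 0 < ω := lt_of_not_ge fun hω => hφ (h.eq_zero_of_nonpos hω)
    have hφ0 : φ 0 ≠ 0 := fun h0 => hφ (funext fun x => by simp [h.eq_mul_cexp_neg_abs hω x, h0])
    have ha : a (‖φ 0‖ ^ 2) = 2 * √ω := by
      exact_mod_cast mul_right_cancel₀ hφ0 (h.apply_sq_norm_mul_eq hω)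
    obtain ⟨θ, ⟨hθ0, hθ⟩, hpolar⟩ := exists_eq_norm_mul_cexp_I_mul (φ 0)
    refine ⟨hω, ‖φ 0‖, θ, norm_pos_iff.2 hφ0, hθ0, hθ, by rw [ha]; ring,
      by rw [ha]; positivity, fun x => ?_⟩
    rw [h.eq_mul_cexp_neg_abs hω x, ← hpolar]
  · rintro ⟨hω, C, θ, hC, -, -, hsqrt, -, hφ⟩
    have hA : ‖(C : ℂ) * cexp (I * θ)‖ = C := by
      rw [norm_mul, mul_comm I, norm_exp_ofReal_mul_I, mul_one, norm_real, norm_of_nonneg hC.le]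
    have hwave := isSolitaryWave_mul_cexp_neg_abs (a := a) ((C : ℂ) * cexp (I * θ))
      (sqrt_pos.2 hω) (by rw [hA, hsqrt]; ring)
    rw [sq_sqrt hω.le, ← funext hφ] at hwave
    refine ⟨hwave, fun h0 => ?_⟩
    have := congr_fun h0 0
    simp [hφ, hC.ne'] at this

/-- the nonzero solitary waves are exactly the functions
`φ(x) = C e^{iθ} e^{-√ω|x|}` with `C > 0`, `ω > 0`, `θ ∈ [0,2π)` and
`√ω = a(C²)/2 > 0`; in particular for `ω ≤ 0` only the zero wave exists. -/
theorem solitary_wave_classification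
    (a : ℝ → ℝ) (ha : ContDiff ℝ 1 a) (ω : ℝ) (φ : ℝ → ℂ) :
    (IsSolitaryWave a ω φ ∧ φ ≠ 0) ↔
      (0 < ω ∧ ∃ C θ : ℝ, 0 < C ∧ 0 ≤ θ ∧ θ < 2 * Real.pi ∧
        Real.sqrt ω = a (C ^ 2) / 2 ∧ 0 < a (C ^ 2) ∧
        ∀ x : ℝ, φ x = (C : ℂ) * Complex.exp (Complex.I * θ) *
          Complex.exp (-(Real.sqrt ω * |x| : ℝ))) :=
  solitary_wave_classification_general a ω φ
end

section
/- Let α = a + a'C² and β = a'C² with a > 0, C > 0, ω = a²/4, and let D(λ) = 2iα(k₊ + k₋) - 4k₊k₋ + α² - β², where k_±(λ) = √(-ω ∓ iλ) with Im k_± > 0 off the cuts. If a' ∈ (a/(√2 C²), a/C²), then D has purely imaginary roots λ = ±iμ with μ = (β/2)√(a² - β²), and μ < ω. -/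
open Real Complex

/-- with `α = a + a'C²`, `β = a'C²`, `ω = a²/4`, and the determinant
`D(λ) = 2iα(k₊+k₋) - 4k₊k₋ + α² - β²` where `k_±(λ) = √(-ω ∓ iλ)` with `Im k_± > 0`
(so that `k₊(±iμ), k₋(±iμ)` equal `i√(ω∓μ)`, `i√(ω±μ)` for `0 < μ < ω`), if
`a' ∈ (a/(√2 C²), a/C²)` then `D` has the purely imaginary roots `λ = ±iμ`,
`μ = (β/2)√(a²-β²)`, and `μ < ω`. -/
theorem determinant_imaginary_roots
    (a ap C : ℝ) (ha : 0 < a) (hC : 0 < C)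
    (h1 : a / (Real.sqrt 2 * C ^ 2) < ap) (h2 : ap < a / C ^ 2) :
    let α : ℝ := a + ap * C ^ 2
    let β : ℝ := ap * C ^ 2
    let ω : ℝ := a ^ 2 / 4
    let μ : ℝ := β / 2 * Real.sqrt (a ^ 2 - β ^ 2)
    let D : ℂ → ℂ → ℂ := fun kp km =>
      2 * Complex.I * (α : ℂ) * (kp + km) - 4 * kp * km + (α : ℂ) ^ 2 - (β : ℂ) ^ 2
    μ < ω ∧
    -- root λ = iμ : k₊(iμ) = i√(ω-μ), k₋(iμ) = i√(ω+μ)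
    D (Complex.I * (Real.sqrt (ω - μ) : ℂ)) (Complex.I * (Real.sqrt (ω + μ) : ℂ)) = 0 ∧
    -- root λ = -iμ : k₊(-iμ) = i√(ω+μ), k₋(-iμ) = i√(ω-μ)
    D (Complex.I * (Real.sqrt (ω + μ) : ℂ)) (Complex.I * (Real.sqrt (ω - μ) : ℂ)) = 0 := by
  intro α β ω μ D
  have hC2 : (0:ℝ) < C ^ 2 := by positivity
  have hβ : β = ap * C ^ 2 := rfl
  have hα : α = a + β := rfl
  have hω : ω = a ^ 2 / 4 := rfl
  have hμ : μ = β / 2 * Real.sqrt (a ^ 2 - β ^ 2) := rfl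
  have hβlt : β < a := by
    have := (lt_div_iff₀ hC2).mp h2
    simpa [hβ] using this
  have hs2pos : (0:ℝ) < Real.sqrt 2 := by positivity
  have hβgt : a / Real.sqrt 2 < β := by
    rw [hβ]
    have h1' : a / Real.sqrt 2 / C ^ 2 < ap := by
      rwa [div_div]
    exact (div_lt_iff₀ hC2).mp h1'
  have hβpos : 0 < β := lt_trans (by positivity) hβgt
  have hsq2 : (Real.sqrt 2) ^ 2 = 2 := Real.sq_sqrt (by norm_num)
  have ha2 : a ^ 2 < 2 * β ^ 2 := by
    have : a < β * Real.sqrt 2 := by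
      rw [← div_lt_iff₀ hs2pos] at *; linarith
    nlinarith [hs2pos.le]
  have hnn : (0:ℝ) ≤ a ^ 2 - β ^ 2 := by nlinarith
  set t := Real.sqrt (a ^ 2 - β ^ 2) with ht
  have htnn : 0 ≤ t := Real.sqrt_nonneg _
  have hs2 : t ^ 2 = a ^ 2 - β ^ 2 := Real.sq_sqrt hnn
  have htlt : t < β := by nlinarith
  have hposbt : (0:ℝ) < (β - t) ^ 2 := pow_pos (by linarith) 2
  have hsm : Real.sqrt (ω - μ) = (β - t) / 2 := by
    rw [show ω - μ = ((β - t) / 2) ^ 2 by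
      rw [hω, hμ]; linear_combination (-(1:ℝ)/4) * hs2]
    exact Real.sqrt_sq (by linarith)
  have hsp : Real.sqrt (ω + μ) = (β + t) / 2 := by
    rw [show ω + μ = ((β + t) / 2) ^ 2 by
      rw [hω, hμ]; linear_combination (-(1:ℝ)/4) * hs2]
    exact Real.sqrt_sq (by linarith)
  have hs2' : (t:ℂ) ^ 2 = (a:ℂ) ^ 2 - (β:ℂ) ^ 2 := by exact_mod_cast hs2
  refine ⟨?_, ?_, ?_⟩
  · rw [hμ, hω]; nlinarith
  · show 2 * Complex.I * (α : ℂ) * (Complex.I * (Real.sqrt (ω - μ) : ℂ) +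
        Complex.I * (Real.sqrt (ω + μ) : ℂ)) -
      4 * (Complex.I * (Real.sqrt (ω - μ) : ℂ)) * (Complex.I * (Real.sqrt (ω + μ) : ℂ)) +
      (α : ℂ) ^ 2 - (β : ℂ) ^ 2 = 0
    rw [hsm, hsp, hα]
    push_cast
    linear_combination (2 * ((a:ℂ) + β) * β - (β:ℂ) ^ 2 + (t:ℂ) ^ 2) * Complex.I_sq
      + (-1:ℂ) * hs2'
  · show 2 * Complex.I * (α : ℂ) * (Complex.I * (Real.sqrt (ω + μ) : ℂ) +
        Complex.I * (Real.sqrt (ω - μ) : ℂ)) -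
      4 * (Complex.I * (Real.sqrt (ω + μ) : ℂ)) * (Complex.I * (Real.sqrt (ω - μ) : ℂ)) +
      (α : ℂ) ^ 2 - (β : ℂ) ^ 2 = 0
    rw [hsm, hsp, hα]
    push_cast
    linear_combination (2 * ((a:ℂ) + β) * β - (β:ℂ) ^ 2 + (t:ℂ) ^ 2) * Complex.I_sq
      + (-1:ℂ) * hs2'
end

section
/- Under the additional spectral condition a' ∈ (a/(√2 C²), a√2(1+√3)/(4C²)), the eigenvalue μ = (β/2)√(a²-β²) with β = a'C² satisfies 2μ > ω, where ω = a²/4. -/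
open Real

/-- under the spectral condition
`a' ∈ (a/(√2 C²), a√2(1+√3)/(4C²))`, the eigenvalue `μ = (β/2)√(a²-β²)` with
`β = a'C²` satisfies `2μ > ω`, where `ω = a²/4`. -/
theorem two_mu_gt_omega
    (a ap C : ℝ) (ha : 0 < a) (hC : 0 < C)
    (h1 : a / (Real.sqrt 2 * C ^ 2) < ap)
    (h2 : ap < a * Real.sqrt 2 * (1 + Real.sqrt 3) / (4 * C ^ 2)) :
    let β : ℝ := ap * C ^ 2
    let μ : ℝ := β / 2 * Real.sqrt (a ^ 2 - β ^ 2)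
    let ω : ℝ := a ^ 2 / 4
    ω < 2 * μ := by
  intro β μ ω
  have hC2 : (0:ℝ) < C ^ 2 := by positivity
  have hs2 : Real.sqrt 2 ^ 2 = 2 := Real.sq_sqrt (by norm_num)
  have hs3 : Real.sqrt 3 ^ 2 = 3 := Real.sq_sqrt (by norm_num)
  have hs2pos : 0 < Real.sqrt 2 := Real.sqrt_pos.mpr (by norm_num)
  have hs3pos : 0 < Real.sqrt 3 := Real.sqrt_pos.mpr (by norm_num)
  have hs3lt : Real.sqrt 3 < 2 := by
    nlinarith [hs3]
  -- lower bound: a / √2 < β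
  have hb1 : a / Real.sqrt 2 < β := by
    have := (div_lt_iff₀ (by positivity : (0:ℝ) < Real.sqrt 2 * C ^ 2)).mp h1
    show a / Real.sqrt 2 < ap * C ^ 2
    rw [div_lt_iff₀ hs2pos]
    nlinarith
  -- upper bound: β < a * √2 * (1 + √3) / 4
  have hb2 : β < a * Real.sqrt 2 * (1 + Real.sqrt 3) / 4 := by
    have := (lt_div_iff₀ (by positivity : (0:ℝ) < 4 * C ^ 2)).mp h2
    show ap * C ^ 2 < a * Real.sqrt 2 * (1 + Real.sqrt 3) / 4
    rw [lt_div_iff₀ (by norm_num : (0:ℝ) < 4)]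
    nlinarith
  have hβpos : 0 < β := lt_trans (by positivity) hb1
  -- a²/2 < β²
  have hlo : a ^ 2 / 2 < β ^ 2 := by
    have h := mul_self_lt_mul_self (by positivity : (0:ℝ) ≤ a / Real.sqrt 2) hb1
    have heq : a / Real.sqrt 2 * (a / Real.sqrt 2) = a ^ 2 / 2 := by
      rw [div_mul_div_comm, Real.mul_self_sqrt (by norm_num)]; ring
    nlinarith [h, heq]
  -- β² < a² (2 + √3) / 4
  have hhi : β ^ 2 < a ^ 2 * (2 + Real.sqrt 3) / 4 := by
    have h := mul_self_lt_mul_self hβpos.le hb2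
    have heq : a * Real.sqrt 2 * (1 + Real.sqrt 3) / 4 * (a * Real.sqrt 2 * (1 + Real.sqrt 3) / 4)
        = a ^ 2 * (2 + Real.sqrt 3) / 4 := by
      linear_combination (a ^ 2 * (1 + Real.sqrt 3) ^ 2 / 16) * hs2
        + (a ^ 2 / 8) * hs3
    nlinarith [h, heq]
  have hpos : 0 < a ^ 2 - β ^ 2 := by nlinarith [hs3lt]
  -- key quadratic inequality
  have key : (a ^ 2 / 4) ^ 2 < β ^ 2 * (a ^ 2 - β ^ 2) := by
    nlinarith [mul_pos (by nlinarith [hs3lt] : 0 < β ^ 2 - a ^ 2 * (2 - Real.sqrt 3) / 4)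
      (by nlinarith : 0 < a ^ 2 * (2 + Real.sqrt 3) / 4 - β ^ 2), hs3]
  show ω < 2 * μ
  have hmu : 2 * μ = Real.sqrt (β ^ 2 * (a ^ 2 - β ^ 2)) := by
    rw [Real.sqrt_mul (by positivity), Real.sqrt_sq hβpos.le]
    show 2 * (β / 2 * Real.sqrt (a ^ 2 - β ^ 2)) = _
    ring
  rw [hmu]
  exact (Real.lt_sqrt (by positivity)).mpr key
end

section
/- There exists a constant c > 0 such that for all ε ∈ (0,1] and all t ≥ 0, ∫₀^t (1 + t - s)^{-3/2} (1 + εs)^{-3/2} ds ≤ c (1 + εt)^{-3/2}. -/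
/-!
Since `ε ≤ 1`, `1 + ε t ≤ ε (1 + t - s) + (1 + ε s)` for `0 ≤ s ≤ t`, so by convexity of `x ↦ x ^ p`
the weight `(1 + ε t) ^ p` is at most `2 ^ (p - 1)` times `ε ^ p (1 + t - s) ^ p + (1 + ε s) ^ p`.
Dividing by the two kernels splits the integrand into `ε ^ p (1 + ε s) ^ (-p) + (1 + t - s) ^ (-p)`,
whose integrals are at most `ε ^ (p - 1) / (p - 1) ≤ 1 / (p - 1)` and `1 / (p - 1)`.
-/

open Real Set intervalIntegral

theorem Real.rpow_add_le_mul_rpow_add_rpow {a b p : ℝ} (ha : 0 ≤ a) (hb : 0 ≤ b) (hp : 1 ≤ p) :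
    (a + b) ^ p ≤ 2 ^ (p - 1) * (a ^ p + b ^ p) := by
  exact_mod_cast NNReal.rpow_add_le_mul_rpow_add_rpow ⟨a, ha⟩ ⟨b, hb⟩ hp

theorem integral_one_add_mul_rpow_neg_le {k p t : ℝ} (hk : 0 < k) (hp : 1 < p) (ht : 0 ≤ t) :
    ∫ s in (0:ℝ)..t, (1 + k * s) ^ (-p) ≤ (k * (p - 1))⁻¹ := by
  have h0 : (0:ℝ) ∉ uIcc 1 (k * t + 1) := by
    rw [uIcc_of_le (by nlinarith)]
    exact fun h => by linarith [h.1]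
  have hint : ∫ s in (0:ℝ)..t, (1 + k * s) ^ (-p)
      = k⁻¹ * ((1 - (k * t + 1) ^ (-p + 1)) / (p - 1)) := by
    simp_rw [add_comm (1:ℝ) (k * _)]
    rw [integral_comp_mul_add (fun x => x ^ (-p)) hk.ne', mul_zero, zero_add,
      integral_rpow (Or.inr ⟨by linarith, h0⟩), smul_eq_mul, one_rpow,
      show -p + 1 = -(p - 1) by ring, div_neg, ← neg_div, neg_sub]
  have hrpow : 0 ≤ (k * t + 1) ^ (-p + 1) := rpow_nonneg (by positivity) _
  rw [hint, mul_inv, ← one_div (p - 1)]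
  exact mul_le_mul_of_nonneg_left (div_le_div_of_nonneg_right (by linarith) (by linarith))
    (inv_nonneg.2 hk.le)

theorem one_add_mul_rpow_le {p ε s t : ℝ} (hp : 1 ≤ p) (hε : 0 ≤ ε) (hs : 0 ≤ s) (hst : s ≤ t) :
    (1 + ε * t) ^ p ≤ 2 ^ (p - 1) * (ε ^ p * (1 + t - s) ^ p + (1 + ε * s) ^ p) :=
  calc (1 + ε * t) ^ p ≤ (ε * (1 + t - s) + (1 + ε * s)) ^ p :=
        rpow_le_rpow (by nlinarith) (by nlinarith) (by linarith)
    _ ≤ 2 ^ (p - 1) * ((ε * (1 + t - s)) ^ p + (1 + ε * s) ^ p) :=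
        rpow_add_le_mul_rpow_add_rpow (by nlinarith) (by nlinarith) hp
    _ = 2 ^ (p - 1) * (ε ^ p * (1 + t - s) ^ p + (1 + ε * s) ^ p) := by
        rw [mul_rpow hε (by linarith)]

theorem rpow_neg_mul_rpow_neg_le {p ε s t : ℝ} (hp : 1 ≤ p) (hε : 0 ≤ ε) (hs : 0 ≤ s)
    (hst : s ≤ t) :
    (1 + t - s) ^ (-p) * (1 + ε * s) ^ (-p)
      ≤ 2 ^ (p - 1) * (1 + ε * t) ^ (-p) * (ε ^ p * (1 + ε * s) ^ (-p) + (1 + t - s) ^ (-p)) := by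
  have key := one_add_mul_rpow_le hp hε hs hst
  have hεs : 0 ≤ ε * s := mul_nonneg hε hs
  have ha : 0 < (1 + t - s) ^ p := rpow_pos_of_pos (by linarith) p
  have hb : 0 < (1 + ε * s) ^ p := rpow_pos_of_pos (by positivity) p
  have hC : 0 < (1 + ε * t) ^ p := rpow_pos_of_pos (by nlinarith) p
  rw [rpow_neg (by linarith), rpow_neg (by positivity), rpow_neg (by nlinarith)]
  generalize (1 + t - s) ^ p = a, (1 + ε * s) ^ p = b, (1 + ε * t) ^ p = C at *
  field_simp
  linarith

theorem integral_one_add_sub_rpow_neg_mul_one_add_mul_rpow_neg_le {p ε t : ℝ} (hp : 1 < p)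
    (hε : 0 < ε) (hε1 : ε ≤ 1) (ht : 0 ≤ t) :
    ∫ s in (0:ℝ)..t, (1 + t - s) ^ (-p) * (1 + ε * s) ^ (-p)
      ≤ 2 ^ p / (p - 1) * (1 + ε * t) ^ (-p) := by
  have hcontA : ContinuousOn (fun s => (1 + t - s) ^ (-p)) (Icc 0 t) :=
    ContinuousOn.rpow_const (by fun_prop) fun s hs => Or.inl (by linarith [hs.2])
  have hcontB : ContinuousOn (fun s => (1 + ε * s) ^ (-p)) (Icc 0 t) :=
    ContinuousOn.rpow_const (by fun_prop) fun s hs => Or.inl (by nlinarith [hs.1])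
  have hintA := hcontA.intervalIntegrable_of_Icc (μ := MeasureTheory.volume) ht
  have hintB := hcontB.intervalIntegrable_of_Icc (μ := MeasureTheory.volume) ht
  have hA : ∫ s in (0:ℝ)..t, (1 + t - s) ^ (-p) ≤ (p - 1)⁻¹ := by
    simpa only [one_mul, add_sub_assoc, integral_comp_sub_left (fun x => (1 + x) ^ (-p)),
      sub_self, sub_zero] using integral_one_add_mul_rpow_neg_le one_pos hp ht
  have hB : ε ^ p * ∫ s in (0:ℝ)..t, (1 + ε * s) ^ (-p) ≤ (p - 1)⁻¹ :=
    calc ε ^ p * ∫ s in (0:ℝ)..t, (1 + ε * s) ^ (-p) ≤ ε ^ p * (ε * (p - 1))⁻¹ := by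
          gcongr; exact integral_one_add_mul_rpow_neg_le hε hp ht
      _ = ε ^ (p - 1) * (p - 1)⁻¹ := by
          rw [rpow_sub_one hε.ne', mul_inv, div_eq_mul_inv, mul_assoc]
      _ ≤ (p - 1)⁻¹ := by
          have : ε ^ (p - 1) ≤ 1 := rpow_le_one hε.le hε1 (by linarith)
          have : 0 ≤ (p - 1)⁻¹ := inv_nonneg.2 (by linarith)
          nlinarith
  have hC : 0 ≤ 2 ^ (p - 1) * (1 + ε * t) ^ (-p) := by positivity
  calc ∫ s in (0:ℝ)..t, (1 + t - s) ^ (-p) * (1 + ε * s) ^ (-p)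
      ≤ ∫ s in (0:ℝ)..t, 2 ^ (p - 1) * (1 + ε * t) ^ (-p)
          * (ε ^ p * (1 + ε * s) ^ (-p) + (1 + t - s) ^ (-p)) :=
        integral_mono_on ht (hintA.mul_continuousOn (hcontB.mono (uIcc_of_le ht).subset))
          (((hintB.const_mul _).add hintA).const_mul _)
          fun s hs => rpow_neg_mul_rpow_neg_le hp.le hε.le hs.1 hs.2
    _ = 2 ^ (p - 1) * (1 + ε * t) ^ (-p)
          * ((ε ^ p * ∫ s in (0:ℝ)..t, (1 + ε * s) ^ (-p)) + ∫ s in (0:ℝ)..t, (1 + t - s) ^ (-p)) := by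
        rw [integral_const_mul, integral_add (hintB.const_mul _) hintA, integral_const_mul]
    _ ≤ 2 ^ (p - 1) * (1 + ε * t) ^ (-p) * ((p - 1)⁻¹ + (p - 1)⁻¹) := by
        gcongr
    _ = 2 ^ p / (p - 1) * (1 + ε * t) ^ (-p) := by
        rw [rpow_sub_one two_ne_zero]
        ring

/-- there is `c > 0` such that for all `ε ∈ (0,1]` and `t ≥ 0`,
`∫₀^t (1+t-s)^{-3/2} (1+εs)^{-3/2} ds ≤ c (1+εt)^{-3/2}`. -/
theorem convolution_decay_estimate :
    ∃ c : ℝ, 0 < c ∧ ∀ ε : ℝ, 0 < ε → ε ≤ 1 → ∀ t : ℝ, 0 ≤ t →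
      (∫ s in (0:ℝ)..t, (1 + t - s) ^ (-(3/2) : ℝ) * (1 + ε * s) ^ (-(3/2) : ℝ))
        ≤ c * (1 + ε * t) ^ (-(3/2) : ℝ) :=
  ⟨2 ^ (3/2 : ℝ) / (3/2 - 1), by positivity, fun _ hε hε1 _ ht =>
    integral_one_add_sub_rpow_neg_mul_one_add_mul_rpow_neg_le (by norm_num) hε hε1 ht⟩
end

section
/- If 2ik₋ + α = 0, then β = 0, α = a, and 2ik₋ + α = a - √(a² + 4μ) < 0, a contradiction; hence 2ik₋ + α ≠ 0 whenever μ > 0 and a > 0. -/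
open Real

/-- the denominator `2ik₋ + α = α - 2√(ω+μ)` in the discrete
eigenfunction is nonzero. Here `α = a + β`, `ω = a²/4`, `μ = (β/2)√(a²-β²) > 0`,
`a > 0`, and `D(iμ) = (2ik₊+α)(2ik₋+α) - β² = 0`, with `2ik₊ + α = α - 2√(ω-μ)`.
Indeed, if `α - 2√(ω+μ) = 0` then `β = 0`, `α = a`, and
`α - 2√(ω+μ) = a - √(a²+4μ) < 0`, a contradiction. -/
theorem eigenfunction_denominator_nonzero
    (a β μ : ℝ) (ha : 0 < a) (hμ : 0 < μ)
    (hμval : μ = β / 2 * Real.sqrt (a ^ 2 - β ^ 2))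
    (hD : ((a + β) - 2 * Real.sqrt (a ^ 2 / 4 - μ)) *
          ((a + β) - 2 * Real.sqrt (a ^ 2 / 4 + μ)) - β ^ 2 = 0) :
    (a + β) - 2 * Real.sqrt (a ^ 2 / 4 + μ) ≠ 0 := by
  intro h
  rw [h, mul_zero, zero_sub, neg_eq_zero, pow_eq_zero_iff two_ne_zero] at hD
  rw [hD] at hμval
  simp at hμval
  exact absurd hμval (ne_of_gt hμ)
end

section
/- Let X be a Banach space and P^d(ω) a family of finite-rank projections depending C¹ on a real parameter ω. Suppose g, h ∈ X satisfy P^d(ω)(g+h) = 0, P^d(ω_T) g = g, and P^d(ω_T) h = 0. Then ‖g‖ ≤ M |ω - ω_T| ‖h‖ / (1 - M|ω - ω_T|), provided M|ω - ω_T| < 1, where M = max over the segment [ω, ω_T] of ‖∂_ω P^d‖. -/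
/-!
From `P ω (g + h) = 0`, `P ωT g = g` and `P ωT h = 0` one reads off `g = (P ωT - P ω) (g + h)`,
so `‖g‖ ≤ ‖P ωT - P ω‖ (‖g‖ + ‖h‖)`. The mean value inequality bounds `‖P ωT - P ω‖` by
`M |ω - ωT|`, and since this is `< 1` the `‖g‖` on the right can be absorbed into the left.
-/

theorem eq_sub_apply_add_of_apply_add_eq_zero {R M : Type*} [Ring R] [AddCommGroup M]
    [Module R M] {A B : M →ₗ[R] M} {g h : M}
    (hA : A (g + h) = 0) (hBg : B g = g) (hBh : B h = 0) :
    g = (B - A) (g + h) := by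
  rw [LinearMap.sub_apply, hA, map_add, hBg, hBh, add_zero, sub_zero]

theorem le_mul_div_one_sub_of_le_mul_add {x y ε : ℝ} (hε : ε < 1)
    (hx : x ≤ ε * (x + y)) :
    x ≤ ε * y / (1 - ε) := by
  rw [le_div_iff₀ (sub_pos.mpr hε)]
  linarith

theorem norm_sub_le_of_norm_deriv_le_uIcc {E : Type*} [NormedAddCommGroup E]
    [NormedSpace ℝ E] {f : ℝ → E} (hf : Differentiable ℝ f) {a b M : ℝ}
    (hM : ∀ s ∈ Set.uIcc a b, ‖deriv f s‖ ≤ M) :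
    ‖f b - f a‖ ≤ M * |a - b| := by
  simpa [abs_sub_comm] using
    (convex_uIcc a b).norm_image_sub_le_of_norm_deriv_le (fun s _ => hf s) hM
      Set.left_mem_uIcc Set.right_mem_uIcc

theorem frozen_projection_estimate_general
    {X : Type*} [NormedAddCommGroup X] [NormedSpace ℝ X]
    (P : ℝ → X →L[ℝ] X) (hP : ContDiff ℝ 1 P)
    (ω ωT : ℝ) (g h : X)
    (h1 : P ω (g + h) = 0) (h2 : P ωT g = g) (h3 : P ωT h = 0)
    (M : ℝ) (hM : ∀ s ∈ Set.uIcc ω ωT, ‖deriv P s‖ ≤ M)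
    (hsmall : M * |ω - ωT| < 1) :
    ‖g‖ ≤ M * |ω - ωT| * ‖h‖ / (1 - M * |ω - ωT|) := by
  have hg : g = (P ωT - P ω) (g + h) :=
    eq_sub_apply_add_of_apply_add_eq_zero (A := (P ω).toLinearMap) (B := (P ωT).toLinearMap)
      h1 h2 h3
  have hmvt : ‖P ωT - P ω‖ ≤ M * |ω - ωT| :=
    norm_sub_le_of_norm_deriv_le_uIcc (hP.differentiable one_ne_zero) hM
  have hM_nonneg : 0 ≤ M := (norm_nonneg _).trans (hM ω Set.left_mem_uIcc)
  refine le_mul_div_one_sub_of_le_mul_add hsmall ?_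
  calc ‖g‖ = ‖(P ωT - P ω) (g + h)‖ := by rw [← hg]
    _ ≤ ‖P ωT - P ω‖ * ‖g + h‖ := (P ωT - P ω).le_opNorm _
    _ ≤ M * |ω - ωT| * (‖g‖ + ‖h‖) := by gcongr; exact norm_add_le g h

/-- let `P^d(ω)` be a `C¹` family of finite-rank projections on a
Banach space `X`, and `g,h ∈ X` with `P^d(ω)(g+h) = 0`, `P^d(ω_T) g = g`,
`P^d(ω_T) h = 0`. If `M` bounds `‖∂_ω P^d‖` on the segment between `ω` and `ω_T`
and `M|ω-ω_T| < 1`, then `‖g‖ ≤ M|ω-ω_T|‖h‖/(1 - M|ω-ω_T|)`. -/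
theorem frozen_projection_estimate
    {X : Type*} [NormedAddCommGroup X] [NormedSpace ℝ X] [CompleteSpace X]
    (P : ℝ → X →L[ℝ] X) (hP : ContDiff ℝ 1 P)
    (hproj : ∀ w : ℝ, (P w) * (P w) = P w)
    (hfr : ∀ w : ℝ, FiniteDimensional ℝ (LinearMap.range (P w).toLinearMap))
    (ω ωT : ℝ) (g h : X)
    (h1 : P ω (g + h) = 0) (h2 : P ωT g = g) (h3 : P ωT h = 0)
    (M : ℝ) (hM : ∀ s ∈ Set.uIcc ω ωT, ‖deriv P s‖ ≤ M)
    (hsmall : M * |ω - ωT| < 1) :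
    ‖g‖ ≤ M * |ω - ωT| * ‖h‖ / (1 - M * |ω - ωT|) :=
  frozen_projection_estimate_general P hP ω ωT g h h1 h2 h3 M hM hsmall
end

section
/- Let the even generalized eigenfunction for λ ∈ 𝒞₊ = [iω, i∞) be τ₊(x) = (conj(D) e^{ik₊|x|} - D e^{-ik₊|x|}) v₊ + 4βik₊ e^{ik₋|x|} v₋, where D = (2ik₊+α)(2ik₋+α) - β², v₊ = (1,i), v₋ = (1,-i), k₊ real and k₋ purely imaginary with Im k₋ > 0. Then τ₊ satisfies, in the distributional sense, the jump condition τ₊'(0+) - τ₊'(0-) = -M τ₊(0) with M = diag(α+β, α-β), and solves the homogeneous system (-λ, -∂² + ω; ∂² - ω, -λ)τ₊ = 0 for x ≠ 0, i.e., it is a generalized eigenfunction of the linearized operator with eigenvalue λ. -/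
open Real Filter Topology

/-- `w = (w₁,w₂)` is a generalized eigenfunction with spectral parameter `lam`
of the linearized operator: it is continuous, solves the homogeneous system
`-lam w₁ + (-w₂'' + ω w₂) = 0`, `(w₁'' - ω w₁) - lam w₂ = 0` for `x ≠ 0`, and at
the origin the derivatives have one-sided limits with jumps
`wᵢ'(0+) - wᵢ'(0-) = -mᵢ wᵢ(0)`, where `M = diag(m₁, m₂)`. -/
def IsGenEigenfunction (ω : ℝ) (m₁ m₂ : ℝ) (lam : ℂ) (w₁ w₂ : ℝ → ℂ) : Prop :=
  Continuous w₁ ∧ Continuous w₂ ∧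
  (∀ x : ℝ, x ≠ 0 →
    DifferentiableAt ℝ w₁ x ∧ DifferentiableAt ℝ (deriv w₁) x ∧
    DifferentiableAt ℝ w₂ x ∧ DifferentiableAt ℝ (deriv w₂) x ∧
    -lam * w₁ x + (-(deriv (deriv w₂) x) + (ω : ℂ) * w₂ x) = 0 ∧
    (deriv (deriv w₁) x - (ω : ℂ) * w₁ x) - lam * w₂ x = 0) ∧
  (∃ d₁p d₁m d₂p d₂m : ℂ,
    Tendsto (deriv w₁) (𝓝[>] (0:ℝ)) (𝓝 d₁p) ∧
    Tendsto (deriv w₁) (𝓝[<] (0:ℝ)) (𝓝 d₁m) ∧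
    Tendsto (deriv w₂) (𝓝[>] (0:ℝ)) (𝓝 d₂p) ∧
    Tendsto (deriv w₂) (𝓝[<] (0:ℝ)) (𝓝 d₂m) ∧
    d₁p - d₁m = -((m₁ : ℂ) * w₁ 0) ∧ d₂p - d₂m = -((m₂ : ℂ) * w₂ 0))

/-!
Write `τ₊ = u(|x|) v₊ + w(|x|) v₋` with `u(t) = conj D e^{ik₊t} - D e^{-ik₊t}` and
`w(t) = 4βik₊ e^{ik₋t}`. On the `v₊` and `v₋` components the system decouples into
`u'' = (ω - ν) u` and `w'' = (ω + ν) w`, which hold since `k₊² = ν - ω` and `k₋² = -(ν + ω)`.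
An even function `f(|x|)` has derivative jump `2 f'(0)` at the origin, so in these coordinates the
jump condition with `M = diag(α + β, α - β)` becomes the linear system
`2u'(0) + αu(0) + βw(0) = 0`, `2w'(0) + αw(0) + βu(0) = 0`; the coefficients `conj D`, `-D`,
`4βik₊` solve it because `conj D - D = -4ik₊(2ik₋ + α)`.
-/

section EvenExtension

variable {E : Type*} [NormedAddCommGroup E] [NormedSpace ℝ E] {F F' F'' : ℝ → E} {x : ℝ}

theorem deriv_comp_abs (hF : ∀ t, HasDerivAt F (F' t) t) (hx : x ≠ 0) :
    deriv (fun y => F |y|) x = (SignType.sign x : ℝ) • F' |x| :=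
  ((hF |x|).scomp x (hasDerivAt_abs hx)).deriv

theorem hasDerivAt_deriv_comp_abs (hF : ∀ t, HasDerivAt F (F' t) t)
    (hF' : ∀ t, HasDerivAt F' (F'' t) t) (hx : x ≠ 0) :
    HasDerivAt (deriv fun y => F |y|) (F'' |x|) x := by
  have hsign : ∀ᶠ y in 𝓝 x, SignType.sign y = SignType.sign x :=
    continuousAt_sign_of_ne_zero hx (isOpen_discrete {SignType.sign x} |>.mem_nhds rfl)
  have hev : deriv (fun y => F |y|) =ᶠ[𝓝 x] fun y => (SignType.sign x : ℝ) • F' |y| := by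
    filter_upwards [hsign, eventually_ne_nhds hx] with y hy hy0
    rw [deriv_comp_abs hF hy0, hy]
  refine ((((hF' |x|).scomp x (hasDerivAt_abs hx)).const_smul
    (SignType.sign x : ℝ)).congr_of_eventuallyEq hev).congr_deriv ?_
  rcases hx.lt_or_gt with h | h <;> simp [h]

theorem tendsto_deriv_comp_abs_nhdsGT (hF : ∀ t, HasDerivAt F (F' t) t) (hF' : Continuous F') :
    Tendsto (deriv fun y => F |y|) (𝓝[>] 0) (𝓝 (F' 0)) := by
  refine (hF'.tendsto 0 |>.mono_left nhdsWithin_le_nhds).congr' ?_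
  filter_upwards [self_mem_nhdsWithin] with y (hy : 0 < y)
  simp [deriv_comp_abs hF hy.ne', hy, abs_of_pos hy]

theorem tendsto_deriv_comp_abs_nhdsLT (hF : ∀ t, HasDerivAt F (F' t) t) (hF' : Continuous F') :
    Tendsto (deriv fun y => F |y|) (𝓝[<] 0) (𝓝 (-F' 0)) := by
  have : Tendsto (fun y => -F' (-y)) (𝓝 0) (𝓝 (-F' (-0))) :=
    ((hF'.comp continuous_neg).neg.tendsto 0)
  rw [neg_zero] at this
  refine (this.mono_left nhdsWithin_le_nhds).congr' ?_
  filter_upwards [self_mem_nhdsWithin] with y (hy : y < 0)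
  simp [deriv_comp_abs hF hy.ne, hy, abs_of_neg hy]

end EvenExtension

theorem hasDerivAt_const_mul_cexp_mul_ofReal (A c : ℂ) (t : ℝ) :
    HasDerivAt (fun t : ℝ => A * Complex.exp (c * t)) (A * c * Complex.exp (c * t)) t := by
  have h := (((hasDerivAt_id (t : ℂ)).const_mul c).cexp.comp_ofReal).const_mul A
  simp only [id, mul_one] at h
  exact h.congr_deriv (by ring)

theorem isGenEigenfunction_comp_abs {ω m₁ m₂ : ℝ} {lam : ℂ} {F₁ F₁' F₁'' F₂ F₂' F₂'' : ℝ → ℂ}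
    (hF₁ : ∀ t, HasDerivAt F₁ (F₁' t) t) (hF₁' : ∀ t, HasDerivAt F₁' (F₁'' t) t)
    (hF₂ : ∀ t, HasDerivAt F₂ (F₂' t) t) (hF₂' : ∀ t, HasDerivAt F₂' (F₂'' t) t)
    (heq₁ : ∀ t, -lam * F₁ t + (-F₂'' t + ω * F₂ t) = 0)
    (heq₂ : ∀ t, F₁'' t - ω * F₁ t - lam * F₂ t = 0)
    (hjump₁ : 2 * F₁' 0 = -(m₁ * F₁ 0)) (hjump₂ : 2 * F₂' 0 = -(m₂ * F₂ 0)) :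
    IsGenEigenfunction ω m₁ m₂ lam (fun x => F₁ |x|) (fun x => F₂ |x|) := by
  have hcont : ∀ {F F' : ℝ → ℂ}, (∀ t, HasDerivAt F (F' t) t) → Continuous F :=
    fun hF => Differentiable.continuous fun t => (hF t).differentiableAt
  refine ⟨(hcont hF₁).comp continuous_abs, (hcont hF₂).comp continuous_abs, fun x hx => ?_,
    _, _, _, _,
    tendsto_deriv_comp_abs_nhdsGT hF₁ (hcont hF₁'), tendsto_deriv_comp_abs_nhdsLT hF₁ (hcont hF₁'),
    tendsto_deriv_comp_abs_nhdsGT hF₂ (hcont hF₂'), tendsto_deriv_comp_abs_nhdsLT hF₂ (hcont hF₂'),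
    by simp only [abs_zero]; linear_combination hjump₁,
    by simp only [abs_zero]; linear_combination hjump₂⟩
  have h₁ := hasDerivAt_deriv_comp_abs hF₁ hF₁' hx
  have h₂ := hasDerivAt_deriv_comp_abs hF₂ hF₂' hx
  refine ⟨((hF₁ |x|).scomp x (hasDerivAt_abs hx)).differentiableAt, h₁.differentiableAt,
    ((hF₂ |x|).scomp x (hasDerivAt_abs hx)).differentiableAt, h₂.differentiableAt, ?_, ?_⟩
  · rw [h₂.deriv]; exact heq₁ |x|
  · rw [h₁.deriv]; exact heq₂ |x|

theorem isGenEigenfunction_of_modes {ω α β : ℝ} {ν : ℂ} {u u' w w' : ℝ → ℂ}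
    (hu : ∀ t, HasDerivAt u (u' t) t) (hu' : ∀ t, HasDerivAt u' ((ω - ν) * u t) t)
    (hw : ∀ t, HasDerivAt w (w' t) t) (hw' : ∀ t, HasDerivAt w' ((ω + ν) * w t) t)
    (hu₀ : 2 * u' 0 + α * u 0 + β * w 0 = 0) (hw₀ : 2 * w' 0 + α * w 0 + β * u 0 = 0) :
    IsGenEigenfunction ω (α + β) (α - β) (Complex.I * ν)
      (fun x => u |x| + w |x|) (fun x => Complex.I * u |x| - Complex.I * w |x|) := by
  refine isGenEigenfunction_comp_abs (F₁ := fun t => u t + w t)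
    (F₂ := fun t => Complex.I * u t - Complex.I * w t)
    (fun t => (hu t).add (hw t)) (fun t => (hu' t).add (hw' t))
    (fun t => ((hu t).const_mul _).sub ((hw t).const_mul _))
    (fun t => ((hu' t).const_mul _).sub ((hw' t).const_mul _))
    (fun t => ?_) (fun t => ?_) ?_ ?_
  · ring
  · linear_combination ν * (w t - u t) * Complex.I_sq
  · push_cast; linear_combination hu₀ + hw₀
  · push_cast; linear_combination Complex.I * (hu₀ - hw₀)

open Complex ComplexConjugate

theorem even_generalized_eigenfunction_general
    (a β ν : ℝ) (hν : a ^ 2 / 4 < ν) :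
    let ω : ℝ := a ^ 2 / 4
    let α : ℝ := a + β
    let kp : ℂ := (Real.sqrt (ν - ω) : ℝ)
    let km : ℂ := Complex.I * (Real.sqrt (ν + ω) : ℝ)
    let D : ℂ := (2 * Complex.I * kp + (α : ℂ)) * (2 * Complex.I * km + (α : ℂ)) - (β : ℂ) ^ 2
    let τ₁ : ℝ → ℂ := fun x =>
      (starRingEnd ℂ D) * Complex.exp (Complex.I * kp * |x|)
        - D * Complex.exp (-(Complex.I * kp * |x|))
        + 4 * (β : ℂ) * Complex.I * kp * Complex.exp (Complex.I * km * |x|)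
    let τ₂ : ℝ → ℂ := fun x =>
      Complex.I * ((starRingEnd ℂ D) * Complex.exp (Complex.I * kp * |x|)
        - D * Complex.exp (-(Complex.I * kp * |x|)))
        - Complex.I * (4 * (β : ℂ) * Complex.I * kp * Complex.exp (Complex.I * km * |x|))
    IsGenEigenfunction ω (α + β) (α - β) (Complex.I * (ν : ℂ)) τ₁ τ₂ := by
  intro ω α kp km D τ₁ τ₂
  have hων : ω < ν := hν
  have hω : 0 ≤ ω := by positivity
  have hp : (I * kp) ^ 2 = ω - ν := by
    rw [mul_pow, I_sq, ← ofReal_pow, Real.sq_sqrt (by linarith)]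
    push_cast; ring
  have hm : (I * km) ^ 2 = ω + ν := by
    rw [mul_pow, mul_pow, I_sq, ← ofReal_pow, Real.sq_sqrt (by linarith)]
    push_cast; ring
  have hD : conj D = (α - 2 * I * kp) * (2 * I * km + α) - β ^ 2 := by
    simp only [D, kp, km, map_sub, map_mul, map_add, map_pow, map_ofNat, conj_I, conj_ofReal]
    ring
  refine isGenEigenfunction_of_modes
    (u := fun t => conj D * exp (I * kp * t) - D * exp (-(I * kp * t)))
    (u' := fun t => conj D * (I * kp) * exp (I * kp * t) - D * (-(I * kp)) * exp (-(I * kp * t)))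
    (w := fun t => 4 * β * I * kp * exp (I * km * t))
    (w' := fun t => 4 * β * I * kp * (I * km) * exp (I * km * t))
    (fun t => ?_) (fun t => ?_) (fun t => ?_) (fun t => ?_) ?_ ?_
  · have h := (hasDerivAt_const_mul_cexp_mul_ofReal (conj D) (I * kp) t).sub
      (hasDerivAt_const_mul_cexp_mul_ofReal D (-(I * kp)) t)
    simp only [neg_mul] at h
    exact h
  · have h := (hasDerivAt_const_mul_cexp_mul_ofReal (conj D * (I * kp)) (I * kp) t).sub
      (hasDerivAt_const_mul_cexp_mul_ofReal (D * -(I * kp)) (-(I * kp)) t)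
    simp only [neg_mul] at h
    exact h.congr_deriv <| by
      linear_combination (conj D * exp (I * kp * t) - D * exp (-(I * kp * t))) * hp
  · exact hasDerivAt_const_mul_cexp_mul_ofReal _ _ t
  · exact (hasDerivAt_const_mul_cexp_mul_ofReal _ _ t).congr_deriv <| by
      linear_combination 4 * β * I * kp * exp (I * km * t) * hm
  all_goals
    simp only [ofReal_zero, mul_zero, neg_zero, Complex.exp_zero, mul_one, hD, D]
    ring

/-- for `λ = iν ∈ 𝒞₊` (`ν > ω`), the even function
`τ₊(x) = (conj(D) e^{ik₊|x|} - D e^{-ik₊|x|}) v₊ + 4βik₊ e^{ik₋|x|} v₋`, with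
`v₊ = (1,i)`, `v₋ = (1,-i)`, `k₊ = √(ν-ω) > 0`, `k₋ = i√(ν+ω)`, and
`D = (2ik₊+α)(2ik₋+α) - β²`, is a generalized eigenfunction of the linearized
operator with eigenvalue `λ`, satisfying the jump condition with
`M = diag(α+β, α-β)`. -/
theorem even_generalized_eigenfunction
    (a β ν : ℝ) (ha : 0 < a) (hν : a ^ 2 / 4 < ν) :
    let ω : ℝ := a ^ 2 / 4
    let α : ℝ := a + β
    let kp : ℂ := (Real.sqrt (ν - ω) : ℝ)
    let km : ℂ := Complex.I * (Real.sqrt (ν + ω) : ℝ)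
    let D : ℂ := (2 * Complex.I * kp + (α : ℂ)) * (2 * Complex.I * km + (α : ℂ)) - (β : ℂ) ^ 2
    let τ₁ : ℝ → ℂ := fun x =>
      (starRingEnd ℂ D) * Complex.exp (Complex.I * kp * |x|)
        - D * Complex.exp (-(Complex.I * kp * |x|))
        + 4 * (β : ℂ) * Complex.I * kp * Complex.exp (Complex.I * km * |x|)
    let τ₂ : ℝ → ℂ := fun x =>
      Complex.I * ((starRingEnd ℂ D) * Complex.exp (Complex.I * kp * |x|)
        - D * Complex.exp (-(Complex.I * kp * |x|)))
        - Complex.I * (4 * (β : ℂ) * Complex.I * kp * Complex.exp (Complex.I * km * |x|))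
    IsGenEigenfunction ω (α + β) (α - β) (Complex.I * (ν : ℂ)) τ₁ τ₂ :=
  even_generalized_eigenfunction_general a β ν hν
end
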